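/- For x in (0,1), the function g(x) = x^{1−c} ₂F₁(a−c+1, b−c+1; 2−c; x) satisfies the hypergeometric differential equation x(1−x)g''(x) + (c − (a+b+1)x)g'(x) − ab g(x) = 0. -/

import Mathlib

/-!
Put `F = ₂F₁(a-c+1, b-c+1; 2-c; ·)`. Differentiating `x^(1-c) F(x)` twice shows that the
hypergeometric operator with parameters `(a, b, c)` applied to `x^(1-c) F` is `x^(1-c)` times the
operator with parameters `(a-c+1, b-c+1, 2-c)` applied to `F`. So it suffices that `₂F₁(a,b;c;·)`
solves its own equation on the unit disc whenever `c ∉ -ℕ`. Write that equation as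
`(z F'' + c F') - (z² F'' + (a+b+1) z F' + a b F) = 0` and differentiate the power series
termwise: the `n`-th coefficient of the left side is `(n+1)(n+c) qₙ₊₁ - (n+a)(n+b) qₙ`, which
vanishes by the ratio of consecutive hypergeometric coefficients.
-/

open Complex

/-- The Gauss hypergeometric series `₂F₁(a,b;c;x)`. -/
noncomputable def hyp (a b c x : ℂ) : ℂ :=
  ∑' n : ℕ, ((ascPochhammer ℂ n).eval a * (ascPochhammer ℂ n).eval b /
    ((ascPochhammer ℂ n).eval c * (n.factorial : ℂ))) * x ^ n

open Filter Topology FormalMultilinearSeries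

theorem HasSum.zero_add_mul_pow {R : Type*} [CommSemiring R] [TopologicalSpace R]
    [IsTopologicalSemiring R] {f : ℕ → R} {z s : R}
    (h : HasSum (fun n => f (n + 1) * z ^ n) s) :
    HasSum (fun n => f n * z ^ n) (f 0 + z * s) := by
  have h' : HasSum (fun n => f (n + 1) * z ^ (n + 1)) (z * s) :=
    (h.mul_left z).congr_fun fun n => by ring
  simpa only [pow_zero, mul_one] using HasSum.zero_add (f := fun n => f n * z ^ n) h'

namespace FormalMultilinearSeries

variable {𝕜 : Type*} [NontriviallyNormedField 𝕜] [CompleteSpace 𝕜] {c : ℕ → 𝕜} {z : 𝕜}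

theorem hasSum_deriv_ofScalarsSum (hz : ‖z‖ₑ < (ofScalars 𝕜 c).radius) :
    HasSum (fun n => (n + 1) * c (n + 1) * z ^ n) (deriv (ofScalarsSum c) z) := by
  set p := ofScalars 𝕜 c
  have hz' : z ∈ Metric.eball 0 p.derivSeries.radius := by
    simpa using hz.trans_le p.radius_le_radius_derivSeries
  rw [← fderiv_apply_one_eq_deriv, ofScalarsSum, p.fderiv_sum hz]
  refine ((p.derivSeries.hasSum hz').mapL (ContinuousLinearMap.apply 𝕜 𝕜 1)).congr_fun ?_
  intro n
  rw [ContinuousLinearMap.apply_apply, apply_eq_pow_smul_coeff, _root_.smul_apply,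
    derivSeries_coeff_one, coeff_ofScalars, nsmul_eq_mul, smul_eq_mul]
  push_cast
  ring

end FormalMultilinearSeries

section Coefficients

variable {𝕂 : Type*} [Field 𝕂] [CharZero 𝕂] (a b c : 𝕂) (n : ℕ)

theorem ordinaryHypergeometricCoefficient_succ_mul :
    (n + 1) * ordinaryHypergeometricCoefficient a b c (n + 1) =
      a * b / c * ordinaryHypergeometricCoefficient (a + 1) (b + 1) (c + 1) n := by
  simp only [ordinaryHypergeometricCoefficient, ascPochhammer_succ_left, Polynomial.eval_mul,
    Polynomial.eval_X, Polynomial.eval_comp, Polynomial.eval_add, Polynomial.eval_one,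
    Nat.factorial_succ, Nat.cast_mul, Nat.cast_succ, mul_inv]
  field_simp

theorem ordinaryHypergeometricCoefficient_succ (hc : c + n ≠ 0) :
    (n + 1) * (c + n) * ordinaryHypergeometricCoefficient a b c (n + 1) =
      (a + n) * (b + n) * ordinaryHypergeometricCoefficient a b c n := by
  simp only [ordinaryHypergeometricCoefficient, ascPochhammer_succ_eval,
    Nat.factorial_succ, Nat.cast_mul, Nat.cast_succ, mul_inv]
  field_simp

end Coefficients

section RCLike

variable {𝕂 : Type*} [RCLike 𝕂] {a b c : 𝕂}

theorem one_le_radius_ordinaryHypergeometricSeries (𝔸 : Type*) [NormedDivisionRing 𝔸]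
    [NormedAlgebra 𝕂 𝔸] (hc : ∀ n : ℕ, c ≠ -n) :
    1 ≤ (ordinaryHypergeometricSeries 𝔸 a b c).radius := by
  by_cases ha : ∃ k : ℕ, a = -k
  · obtain ⟨k, rfl⟩ := ha
    simp [ordinaryHypergeometric_radius_top_of_neg_nat₁]
  by_cases hb : ∃ k : ℕ, b = -k
  · obtain ⟨k, rfl⟩ := hb
    simp [ordinaryHypergeometric_radius_top_of_neg_nat₂]
  push Not at ha hb
  refine (ordinaryHypergeometricSeries_radius_eq_one 𝔸 a b c fun k => ?_).ge
  refine ⟨fun h => ha k ?_, fun h => hb k ?_, fun h => hc k ?_⟩ <;> linear_combination h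

variable (a b) {z : 𝕂}

theorem enorm_lt_radius_ordinaryHypergeometricSeries (hc : ∀ n : ℕ, c ≠ -n) (hz : ‖z‖ < 1) :
    ‖z‖ₑ < (ordinaryHypergeometricSeries 𝕂 a b c).radius :=
  lt_of_lt_of_le (by simpa [← ofReal_norm] using hz)
    (one_le_radius_ordinaryHypergeometricSeries 𝕂 hc)

theorem analyticOnNhd_ordinaryHypergeometric (hc : ∀ n : ℕ, c ≠ -n) :
    AnalyticOnNhd 𝕂 (₂F₁ a b c : 𝕂 → 𝕂) (Metric.ball 0 1) := fun z hz =>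
  ((ordinaryHypergeometricSeries 𝕂 a b c).hasFPowerSeriesOnBall
    (zero_lt_one.trans_le (one_le_radius_ordinaryHypergeometricSeries 𝕂 hc))).analyticAt_of_mem
    (by simpa using
      enorm_lt_radius_ordinaryHypergeometricSeries a b hc (mem_ball_zero_iff.mp hz))

theorem hasSum_ordinaryHypergeometric (hc : ∀ n : ℕ, c ≠ -n) (hz : ‖z‖ < 1) :
    HasSum (fun n => ordinaryHypergeometricCoefficient a b c n * z ^ n) (₂F₁ a b c z) := by
  have h := (ordinaryHypergeometricSeries 𝕂 a b c).hasSum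
    (by simpa using enorm_lt_radius_ordinaryHypergeometricSeries a b hc hz)
  rwa [ordinaryHypergeometricSeries_apply_eq'] at h

theorem hasSum_deriv_ordinaryHypergeometric (hc : ∀ n : ℕ, c ≠ -n) (hz : ‖z‖ < 1) :
    HasSum (fun n => (n + 1) * ordinaryHypergeometricCoefficient a b c (n + 1) * z ^ n)
      (deriv (₂F₁ a b c) z) :=
  hasSum_deriv_ofScalarsSum (enorm_lt_radius_ordinaryHypergeometricSeries a b hc hz)

theorem deriv_ordinaryHypergeometric (hc : ∀ n : ℕ, c ≠ -n) (hz : ‖z‖ < 1) :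
    deriv (₂F₁ a b c) z = a * b / c * ₂F₁ (a + 1) (b + 1) (c + 1) z := by
  have hc' : ∀ n : ℕ, c + 1 ≠ -n := fun n h => hc (n + 1) (by push_cast; linear_combination h)
  refine (hasSum_deriv_ordinaryHypergeometric a b hc hz).unique
    (((hasSum_ordinaryHypergeometric (a + 1) (b + 1) hc' hz).mul_left (a * b / c)).congr_fun
      fun n => ?_)
  rw [ordinaryHypergeometricCoefficient_succ_mul, mul_assoc]

theorem hasSum_deriv_deriv_ordinaryHypergeometric (hc : ∀ n : ℕ, c ≠ -n) (hz : ‖z‖ < 1) :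
    HasSum (fun n => (n + 1) * (n + 2) * ordinaryHypergeometricCoefficient a b c (n + 2) * z ^ n)
      (deriv (deriv (₂F₁ a b c)) z) := by
  have hc' : ∀ n : ℕ, c + 1 ≠ -n := fun n h => hc (n + 1) (by push_cast; linear_combination h)
  have hderiv : deriv (₂F₁ a b c) =ᶠ[𝓝 z] fun w => a * b / c * ₂F₁ (a + 1) (b + 1) (c + 1) w :=
    eventually_of_mem (Metric.isOpen_ball.mem_nhds (mem_ball_zero_iff.mpr hz)) fun w hw =>
      deriv_ordinaryHypergeometric a b hc (mem_ball_zero_iff.mp hw)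
  rw [hderiv.deriv_eq, deriv_const_mul_field']
  refine ((hasSum_deriv_ordinaryHypergeometric (a + 1) (b + 1) hc' hz).mul_left
    (a * b / c)).congr_fun fun n => ?_
  have h := ordinaryHypergeometricCoefficient_succ_mul a b c (n + 1)
  push_cast at h
  linear_combination (n + 1) * z ^ n * h

theorem ordinaryHypergeometric_ode (hc : ∀ n : ℕ, c ≠ -n) (hz : ‖z‖ < 1) :
    z * (1 - z) * deriv (deriv (₂F₁ a b c)) z + (c - (a + b + 1) * z) * deriv (₂F₁ a b c) z
      - a * b * ₂F₁ a b c z = 0 := by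
  set q := ordinaryHypergeometricCoefficient a b c
  have S0 := hasSum_ordinaryHypergeometric a b hc hz
  have S1 := hasSum_deriv_ordinaryHypergeometric a b hc hz
  have S2 := hasSum_deriv_deriv_ordinaryHypergeometric a b hc hz
  have zS1 : HasSum (fun n => n * q n * z ^ n) (z * deriv (₂F₁ a b c) z) := by
    simpa using HasSum.zero_add_mul_pow (f := fun n => n * q n) (by simpa using S1)
  have zS2 : HasSum (fun n => n * (n + 1) * q (n + 1) * z ^ n)
      (z * deriv (deriv (₂F₁ a b c)) z) := by
    simpa using HasSum.zero_add_mul_pow (f := fun n => n * (n + 1) * q (n + 1))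
      (by simpa [add_assoc, one_add_one_eq_two] using S2)
  have zzS2 : HasSum (fun n => n * (n - 1) * q n * z ^ n)
      (z * (z * deriv (deriv (₂F₁ a b c)) z)) := by
    simpa using HasSum.zero_add_mul_pow (f := fun n => n * (n - 1) * q n)
      (by simpa [mul_comm] using zS2)
  have hsum := (zS2.add (S1.mul_left c)).sub
    ((zzS2.add (zS1.mul_left (a + b + 1))).add (S0.mul_left (a * b)))
  have hzero : HasSum (fun _ : ℕ => (0 : 𝕂)) _ := hsum.congr_fun fun n => by
    have h := ordinaryHypergeometricCoefficient_succ a b c n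
      (fun h => hc n (by linear_combination h))
    linear_combination -z ^ n * h
  linear_combination hzero.unique hasSum_zero

end RCLike

theorem hyp_eq_ordinaryHypergeometric (a b c z : ℂ) : hyp a b c z = ₂F₁ a b c z := by
  rw [hyp, ordinaryHypergeometric_eq_tsum]
  congr 1 with n
  rw [smul_eq_mul, div_eq_mul_inv, mul_inv]
  ring

theorem hasDerivAt_ofReal_cpow_mul {F : ℂ → ℂ} {F' : ℂ} (s : ℂ) {t : ℝ} (ht : 0 < t)
    (hF : HasDerivAt F F' t) :
    HasDerivAt (fun u : ℝ => (u : ℂ) ^ s * F u)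
      (s * (t : ℂ) ^ (s - 1) * F t + (t : ℂ) ^ s * F') t :=
  ((hasStrictDerivAt_cpow_const (ofReal_mem_slitPlane.2 ht)).hasDerivAt.mul hF).comp_ofReal

theorem deriv_deriv_ofReal_cpow_mul {F F' : ℂ → ℂ} {F'' : ℂ} (s : ℂ) {x : ℝ} (hx : 0 < x)
    (hF : ∀ᶠ w in 𝓝 (x : ℂ), HasDerivAt F (F' w) w) (hF' : HasDerivAt F' F'' x) :
    deriv (deriv fun t : ℝ => (t : ℂ) ^ s * F t) x =
      s * ((s - 1) * (x : ℂ) ^ (s - 1 - 1) * F x + (x : ℂ) ^ (s - 1) * F' x)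
        + (s * (x : ℂ) ^ (s - 1) * F' x + (x : ℂ) ^ s * F'') := by
  have hderiv : deriv (fun t : ℝ => (t : ℂ) ^ s * F t) =ᶠ[𝓝 x]
      fun t => s * ((t : ℂ) ^ (s - 1) * F t) + (t : ℂ) ^ s * F' t := by
    filter_upwards [continuous_ofReal.continuousAt.eventually hF, eventually_gt_nhds hx]
      with t hFt ht
    rw [(hasDerivAt_ofReal_cpow_mul s ht hFt).deriv, mul_assoc]
  rw [hderiv.deriv_eq]
  exact (((hasDerivAt_ofReal_cpow_mul (s - 1) hx hF.self_of_nhds).const_mul s).add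
    (hasDerivAt_ofReal_cpow_mul s hx hF')).deriv

/--  solves the hypergeometric ODE on . -/
theorem second_solution_at_zero_solves_ODE (a b c : ℂ) (hc : ∀ k : ℤ, c ≠ (k : ℂ))
    (x : ℝ) (hx : x ∈ Set.Ioo (0 : ℝ) 1) :
    (x : ℂ) * (1 - (x : ℂ)) *
        deriv (deriv (fun t : ℝ => (t : ℂ) ^ (1 - c) * hyp (a - c + 1) (b - c + 1) (2 - c) t)) x
      + (c - (a + b + 1) * (x : ℂ)) *
        deriv (fun t : ℝ => (t : ℂ) ^ (1 - c) * hyp (a - c + 1) (b - c + 1) (2 - c) t) x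
      - a * b * ((x : ℂ) ^ (1 - c) * hyp (a - c + 1) (b - c + 1) (2 - c) x) = 0 := by
  obtain ⟨hx0, hx1⟩ := hx
  have hC : ∀ n : ℕ, 2 - c ≠ -n := fun n h => hc (n + 2) (by push_cast; linear_combination -h)
  have hxball : (x : ℂ) ∈ Metric.ball 0 1 := by simpa [abs_of_pos hx0]
  simp only [hyp_eq_ordinaryHypergeometric]
  set F : ℂ → ℂ := ₂F₁ (a - c + 1) (b - c + 1) (2 - c)
  have hF := analyticOnNhd_ordinaryHypergeometric (a - c + 1) (b - c + 1) hC
  have hF' : ∀ᶠ w in 𝓝 (x : ℂ), HasDerivAt F (deriv F w) w :=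
    eventually_of_mem (Metric.isOpen_ball.mem_nhds hxball) fun w hw =>
      (hF w hw).differentiableAt.hasDerivAt
  have hF'' := (hF.deriv _ hxball).differentiableAt.hasDerivAt
  rw [deriv_deriv_ofReal_cpow_mul (1 - c) hx0 hF' hF'',
    (hasDerivAt_ofReal_cpow_mul (1 - c) hx0 hF'.self_of_nhds).deriv]
  have hode :=
    ordinaryHypergeometric_ode (a - c + 1) (b - c + 1) hC (mem_ball_zero_iff.mp hxball)
  have hx0' : (x : ℂ) ≠ 0 := ofReal_ne_zero.mpr hx0.ne'
  have hpow (s : ℂ) : (x : ℂ) ^ s = (x : ℂ) ^ (s - 1) * x := by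
    rw [cpow_sub _ _ hx0', cpow_one, div_mul_cancel₀ _ hx0']
  rw [hpow (1 - c), hpow (1 - c - 1)]
  linear_combination (x : ℂ) ^ (1 - c - 1 - 1) * (x : ℂ) ^ 2 * hode
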